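/- arXiv:2003.08697 — 2 statements merged into one kernel-verified Lean document; each statement's English description precedes it below -/
import Mathlib

section
/- Let p be a prime and let R be a nontrivial commutative ring that is p-adically complete. Then there exists a unique multiplicative monoid homomorphism (−)♯ : R♭ → R from the tilt of R to R such that for every element a = (x₀, x₁, x₂, …) of R♭, the image of a♯ under the quotient map R → R/pR equals the zeroth component x₀. (Concretely, a♯ = lim_{n→∞} yₙ^{pⁿ} for any choice of lifts yₙ ∈ R of the components xₙ ∈ R/pR, the limit being taken in the p-adic topology.) -/
/-- The tilt of a (`p`-adically complete) commutative ring `R`: the inverse-limit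
perfection of `R ⧸ (p)` along the Frobenius, regarded as a multiplicative monoid,
i.e. the submonoid of `ℕ → R ⧸ (p)` consisting of sequences `(x₀, x₁, x₂, …)` with
`xₙ₊₁ ^ p = xₙ` for all `n`. -/
def RingTilt (R : Type*) [CommRing R] (p : ℕ) :
    Submonoid (ℕ → R ⧸ Ideal.span {(p : R)}) :=
  Monoid.perfection (R ⧸ Ideal.span {(p : R)}) p

section aux
variable {R : Type*} [CommRing R] {p : ℕ}

lemma tilt_spec (a : RingTilt R p) :
    ∀ n, (a : ℕ → R ⧸ Ideal.span {(p : R)}) (n + 1) ^ p = (a : ℕ → _) n := a.2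

lemma tilt_pow (a : RingTilt R p) (m k : ℕ) :
    (a : ℕ → R ⧸ Ideal.span {(p : R)}) (m + k) ^ p ^ k = (a : ℕ → _) m := by
  induction k with
  | zero => simp
  | succ k ih =>
    rw [pow_succ', pow_mul, show m + (k+1) = m + k + 1 from rfl, tilt_spec a (m + k)]
    exact ih

noncomputable def tiltLift (a : RingTilt R p) (n : ℕ) : R :=
  (Ideal.Quotient.mk_surjective ((a : ℕ → R ⧸ Ideal.span {(p : R)}) n)).choose

lemma mk_tiltLift (a : RingTilt R p) (n : ℕ) :
    Ideal.Quotient.mk (Ideal.span {(p : R)}) (tiltLift a n) = (a : ℕ → _) n :=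
  (Ideal.Quotient.mk_surjective _).choose_spec

lemma key_pow (w v : R) (h : Ideal.Quotient.mk (Ideal.span {(p : R)}) w
    = Ideal.Quotient.mk (Ideal.span {(p : R)}) v) (n : ℕ) :
    w ^ p ^ n - v ^ p ^ n ∈ Ideal.span {(p : R)} ^ (n + 1) := by
  rw [Ideal.span_singleton_pow, Ideal.mem_span_singleton]
  have h' : (p : R) ∣ w - v := by
    rw [← Ideal.mem_span_singleton, ← Ideal.Quotient.eq]; exact h
  exact_mod_cast dvd_sub_pow_of_dvd_sub h' n

lemma smul_top_eq (J : Ideal R) : (J • ⊤ : Submodule R R) = J := by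
  rw [Ideal.smul_eq_mul, Ideal.mul_top]

end aux

section main
variable (p : ℕ) [Fact p.Prime] {R : Type*} [CommRing R]
  [IsAdicComplete (Ideal.span {(p : R)}) R]

lemma tilt_cauchy (a : RingTilt R p) {m n : ℕ} (h : m ≤ n) :
    tiltLift a m ^ p ^ m ≡ tiltLift a n ^ p ^ n
      [SMOD (Ideal.span {(p : R)} ^ m • ⊤ : Submodule R R)] := by
  rw [SModEq.sub_mem, smul_top_eq]
  obtain ⟨k, rfl⟩ := Nat.exists_eq_add_of_le h
  have h1 : tiltLift a (m + k) ^ p ^ (m + k) = (tiltLift a (m + k) ^ p ^ k) ^ p ^ m := by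
    rw [← pow_mul, ← pow_add, Nat.add_comm k m]
  rw [h1]
  refine Ideal.pow_le_pow_right (Nat.le_succ m) (key_pow _ _ ?_ m)
  rw [map_pow, mk_tiltLift, mk_tiltLift, tilt_pow]

noncomputable def sharpFun (a : RingTilt R p) : R :=
  (IsPrecomplete.prec (IsAdicComplete.toIsPrecomplete)
    (fun {m n} h => tilt_cauchy p a h)).choose

lemma sharpFun_spec (a : RingTilt R p) (n : ℕ) :
    sharpFun p a - tiltLift a n ^ p ^ n ∈ Ideal.span {(p : R)} ^ n := by
  have h := (IsPrecomplete.prec (IsAdicComplete.toIsPrecomplete)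
    (fun {m n} h => tilt_cauchy p a h)).choose_spec n
  rw [SModEq.sub_mem, smul_top_eq] at h
  have h2 := neg_mem h
  rw [neg_sub] at h2
  exact h2

lemma eq_sharpFun (a : RingTilt R p) (w : R)
    (h : ∀ n, w - tiltLift a n ^ p ^ n ∈ Ideal.span {(p : R)} ^ n) :
    w = sharpFun p a := by
  have H : ∀ n : ℕ, w - sharpFun p a ≡ 0
      [SMOD (Ideal.span {(p : R)} ^ n • ⊤ : Submodule R R)] := by
    intro n
    rw [SModEq.zero, smul_top_eq]
    have := sub_mem (h n) (sharpFun_spec p a n)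
    simpa using this
  have := IsHausdorff.haus (IsAdicComplete.toIsHausdorff) _ H
  exact sub_eq_zero.mp this

noncomputable def tiltShift (a : RingTilt R p) (n : ℕ) : RingTilt R p :=
  ⟨fun k => (a : ℕ → R ⧸ Ideal.span {(p : R)}) (k + n), fun k => by
    show (a : ℕ → R ⧸ Ideal.span {(p : R)}) (k + 1 + n) ^ p
        = (a : ℕ → R ⧸ Ideal.span {(p : R)}) (k + n)
    rw [show k + 1 + n = k + n + 1 by omega]
    exact tilt_spec a (k + n)⟩

lemma tiltShift_pow (a : RingTilt R p) (n : ℕ) : tiltShift p a n ^ p ^ n = a := by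
  apply Subtype.ext
  funext k
  show ((tiltShift p a n : ℕ → R ⧸ Ideal.span {(p : R)}) ^ p ^ n) k = _
  rw [Pi.pow_apply]
  exact tilt_pow a k n

theorem exists_unique_sharp' [Nontrivial R] :
    ∃! sharp : RingTilt R p →* R,
      ∀ a : RingTilt R p,
        Ideal.Quotient.mk (Ideal.span {(p : R)}) (sharp a)
          = (a : ℕ → R ⧸ Ideal.span {(p : R)}) 0 := by
  refine ⟨{ toFun := sharpFun p
            map_one' := ?_
            map_mul' := ?_ }, ?_, ?_⟩
  · symm
    apply eq_sharpFun
    intro n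
    have h : Ideal.Quotient.mk (Ideal.span {(p : R)}) (1 : R)
        = Ideal.Quotient.mk (Ideal.span {(p : R)}) (tiltLift (1 : RingTilt R p) n) := by
      rw [mk_tiltLift, map_one]
      rfl
    have := Ideal.pow_le_pow_right (Nat.le_succ n) (key_pow _ _ h n)
    simpa using this
  · intro a b
    symm
    apply eq_sharpFun
    intro n
    have h1 := sharpFun_spec p a n
    have h2 := sharpFun_spec p b n
    have h3 : sharpFun p a * sharpFun p b - (tiltLift a n * tiltLift b n) ^ p ^ n
        ∈ Ideal.span {(p : R)} ^ n := by
      rw [mul_pow]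
      have e : sharpFun p a * sharpFun p b - tiltLift a n ^ p ^ n * tiltLift b n ^ p ^ n
          = sharpFun p a * (sharpFun p b - tiltLift b n ^ p ^ n)
            + tiltLift b n ^ p ^ n * (sharpFun p a - tiltLift a n ^ p ^ n) := by ring
      rw [e]
      exact add_mem (Ideal.mul_mem_left _ _ h2) (Ideal.mul_mem_left _ _ h1)
    have h4 : (tiltLift a n * tiltLift b n) ^ p ^ n - tiltLift (a * b) n ^ p ^ n
        ∈ Ideal.span {(p : R)} ^ n := by
      refine Ideal.pow_le_pow_right (Nat.le_succ n) (key_pow _ _ ?_ n)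
      rw [map_mul, mk_tiltLift, mk_tiltLift, mk_tiltLift]
      rfl
    simpa [sub_add_sub_cancel] using add_mem h3 h4
  · intro a
    have h := sharpFun_spec p a 1
    rw [pow_one, pow_one] at h
    show Ideal.Quotient.mk _ (sharpFun p a) = _
    rw [Ideal.Quotient.eq.mpr h, map_pow, mk_tiltLift, tilt_spec a 0]
  · intro f hf
    ext a
    show f a = sharpFun p a
    apply eq_sharpFun
    intro n
    have h1 : f a = f (tiltShift p a n) ^ p ^ n := by
      rw [← map_pow, tiltShift_pow]
    have h2 : Ideal.Quotient.mk (Ideal.span {(p : R)}) (f (tiltShift p a n))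
        = Ideal.Quotient.mk (Ideal.span {(p : R)}) (tiltLift a n) := by
      rw [hf (tiltShift p a n), mk_tiltLift]
      show (a : ℕ → R ⧸ Ideal.span {(p : R)}) (0 + n)
          = (a : ℕ → R ⧸ Ideal.span {(p : R)}) n
      rw [Nat.zero_add]
    rw [h1]
    exact Ideal.pow_le_pow_right (Nat.le_succ n) (key_pow _ _ h2 n)

end main

/-- For a prime `p` and a nontrivial `p`-adically complete commutative ring `R`, there is a
unique multiplicative monoid homomorphism `(−)♯ : R♭ →* R` from the tilt of `R` to `R`
such that for every `a = (x₀, x₁, …)` in `R♭`, the image of `a♯` in `R ⧸ (p)` is `x₀`. -/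
theorem exists_unique_sharp (p : ℕ) [Fact p.Prime] (R : Type*) [CommRing R] [Nontrivial R]
    [IsAdicComplete (Ideal.span {(p : R)}) R] :
    ∃! sharp : RingTilt R p →* R,
      ∀ a : RingTilt R p,
        Ideal.Quotient.mk (Ideal.span {(p : R)}) (sharp a) = (a : ℕ → R ⧸ Ideal.span {(p : R)}) 0 :=
  exists_unique_sharp' p
end

section
/- Let p be a prime, let A be a perfect commutative ring of characteristic p, let B be a commutative ring of characteristic p, and let g : B → C be a surjective ring homomorphism onto a commutative ring C such that B is (ker g)-adically complete. Then every ring homomorphism σ : A → C lifts uniquely along g: there exists exactly one ring homomorphism h : A → B with g ∘ h = σ. -/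
/-!
Write `I = ker g`, so that `C = B ⧸ I`. Since `(x + y) ^ p ^ n = x ^ p ^ n + y ^ p ^ n` in `B` and
`I ^ p ^ n ≤ I ^ n`, the map `x mod I ↦ x ^ p ^ n mod I ^ n` is a well-defined ring homomorphism
`B ⧸ I → B ⧸ I ^ n`. Precomposing it with `σ ∘ Frob⁻ⁿ` (which exists as `A` is perfect) gives
compatible ring maps `A → B ⧸ I ^ n`, hence a lift `A → B` by completeness. Conversely, any lift
`h` satisfies `h a = h (a ^ (1 / p ^ n)) ^ p ^ n`, so modulo `I ^ n` it is forced to agree with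
these maps, and `B` is separated.
-/

open Ideal Quotient

section

variable {A B : Type*} [CommRing A] [CommRing B] (p : ℕ) [Fact p.Prime] [CharP B p] (I : Ideal B)

noncomputable def Ideal.quotientIterateFrobenius (n : ℕ) : B ⧸ I →+* B ⧸ I ^ n :=
  Quotient.lift I ((mk (I ^ n)).comp (iterateFrobenius B p n)) fun x hx => by
    rw [RingHom.comp_apply, iterateFrobenius_def, eq_zero_iff_mem]
    exact pow_le_pow_right (Nat.lt_pow_self (Fact.out : p.Prime).one_lt).le (pow_mem_pow hx _)

@[simp]
theorem Ideal.quotientIterateFrobenius_mk (n : ℕ) (x : B) :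
    quotientIterateFrobenius p I n (mk I x) = mk (I ^ n) (x ^ p ^ n) :=
  rfl

variable [CharP A p] [PerfectRing A p]

noncomputable def liftModPow (σ : A →+* B ⧸ I) (n : ℕ) : A →+* B ⧸ I ^ n :=
  (quotientIterateFrobenius p I n).comp (σ.comp (iterateFrobeniusEquiv A p n).symm.toRingHom)

theorem liftModPow_pow (σ : A →+* B ⧸ I) (n : ℕ) (a : A) :
    liftModPow p I σ n (a ^ p ^ n) = quotientIterateFrobenius p I n (σ a) :=
  congrArg (fun c => quotientIterateFrobenius p I n (σ c))
    ((iterateFrobeniusEquiv A p n).symm_apply_apply a)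

theorem factorPow_comp_liftModPow (σ : A →+* B ⧸ I) {m n : ℕ} (hle : m ≤ n) :
    (factorPow I hle).comp (liftModPow p I σ n) = liftModPow p I σ m := by
  ext a
  obtain ⟨b, rfl⟩ := (iterateFrobeniusEquiv A p n).surjective a
  obtain ⟨x, hx⟩ := Ideal.Quotient.mk_surjective (σ b)
  have hpow : b ^ p ^ n = (b ^ p ^ (n - m)) ^ p ^ m := by
    rw [← pow_mul, ← pow_add, Nat.sub_add_cancel hle]
  rw [RingHom.comp_apply, iterateFrobeniusEquiv_def, liftModPow_pow, hpow, liftModPow_pow,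
    map_pow, ← hx, ← map_pow, quotientIterateFrobenius_mk, quotientIterateFrobenius_mk,
    ← pow_mul, ← pow_add, Nat.sub_add_cancel hle, factor_mk]

theorem mk_pow_comp_eq_liftModPow {σ : A →+* B ⧸ I} {F : A →+* B} (hF : (mk I).comp F = σ)
    (n : ℕ) : (mk (I ^ n)).comp F = liftModPow p I σ n := by
  ext a
  obtain ⟨b, rfl⟩ := (iterateFrobeniusEquiv A p n).surjective a
  rw [iterateFrobeniusEquiv_def, liftModPow_pow, ← hF, RingHom.comp_apply, RingHom.comp_apply,
    map_pow, quotientIterateFrobenius_mk]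

end

theorem existsUnique_lift_of_isAdicComplete {A B : Type*} [CommRing A] [CommRing B] (p : ℕ)
    [Fact p.Prime] [CharP A p] [PerfectRing A p] [CharP B p] (I : Ideal B) [IsAdicComplete I B]
    (σ : A →+* B ⧸ I) :
    ∃! F : A →+* B, (mk I).comp F = σ := by
  set F := IsAdicComplete.liftRingHom I (liftModPow p I σ) (factorPow_comp_liftModPow p I σ)
  refine ⟨F, ?_, fun F' hF' => IsAdicComplete.eq_liftRingHom I _ _ F'
    (mk_pow_comp_eq_liftModPow p I hF')⟩
  ext a
  obtain ⟨b, rfl⟩ := (iterateFrobeniusEquiv A p 1).surjective a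
  obtain ⟨x, hx⟩ := Ideal.Quotient.mk_surjective (σ b)
  rw [RingHom.comp_apply, ← factor_mk (pow_one I).le, IsAdicComplete.mk_liftRingHom,
    iterateFrobeniusEquiv_def, liftModPow_pow, map_pow σ, ← hx, quotientIterateFrobenius_mk,
    factor_mk, map_pow]

/-- Let `p` be a prime, `A` a perfect commutative ring of characteristic `p`, `B` a
commutative ring of characteristic `p`, and `g : B → C` a surjective ring homomorphism
such that `B` is `(ker g)`-adically complete. Then every ring homomorphism `σ : A → C`
lifts uniquely along `g`. -/
theorem exists_unique_lift_of_perfect (p : ℕ) [Fact p.Prime]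
    (A B C : Type*) [CommRing A] [CommRing B] [CommRing C]
    [CharP A p] [PerfectRing A p] [CharP B p]
    (g : B →+* C) (hg : Function.Surjective g)
    [IsAdicComplete (RingHom.ker g) B]
    (σ : A →+* C) :
    ∃! h : A →+* B, g.comp h = σ := by
  set e := RingHom.quotientKerEquivOfSurjective hg
  refine (existsUnique_congr fun h => ?_).mpr
    (existsUnique_lift_of_isAdicComplete p (RingHom.ker g) ((e.symm : C →+* _).comp σ))
  simp only [RingHom.ext_iff, RingHom.comp_apply, RingHom.coe_coe, RingEquiv.eq_symm_apply, e,
    RingHom.quotientKerEquivOfSurjective_apply_mk]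
end
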